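/- For every crossingless matching a ∈ B^n, the component K_a admits the alternative description K_a = {(L_1,…,L_{2n}) ∈ Y_{2n} : L_{s_a(j)} = z^{−d_a(j)} L_{j−1} for all j ∈ O_a}, where z^{−d} denotes the d-fold preimage under z (in the ambient space E). In particular, every (L_1,…,L_{2n}) ∈ Y_{2n} satisfying these preimage conditions automatically satisfies L_{2n} = E_n. -/

import Mathlib

/-!
The map `z` has a two-dimensional kernel, so a `d`-fold preimage under `z` has dimension at most
`2d` more than the subspace. As `dim L_{s_a(j)} = s_a(j) ≥ (j - 1) + 2 d_a(j)`, the inclusion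
`L_{s_a(j)} ⊆ z^{-d_a(j)} L_{j-1}` forced by `L_{s_a(j)} ⊆ E_n ∩ z^{-d_a(j)} L_{j-1}` is an equality.

Conversely, call `k` a cut of `a` if no pair of `a` joins `{1,…,k}` to `{k+1,…,2n}`. A positive
cut `k` is the larger end of a pair `(i, k)`, and `i - 1` is again a cut because `a` is
crossingless. The dimension count now forces `k - i + 1 = 2 d_a(i)`, so induction over cuts
gives `L_k = ker z^{k/2}`; in particular `L_{2n} = ker z^n = E_n`.
-/

open scoped ComplexInnerProductSpace

open Fin.NatCast

noncomputable section

abbrev E (N : ℕ) := EuclideanSpace ℂ (Fin N ⊕ Fin N)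

def zmap (N : ℕ) : E N →ₗ[ℂ] E N where
  toFun v := WithLp.toLp 2 fun i =>
    match i with
    | Sum.inl j => if h : (j : ℕ) + 1 < N then v (Sum.inl ⟨(j : ℕ) + 1, h⟩) else 0
    | Sum.inr j => if h : (j : ℕ) + 1 < N then v (Sum.inr ⟨(j : ℕ) + 1, h⟩) else 0
  map_add' u v := by
    apply PiLp.ext; intro i
    rcases i with j | j <;> simp only [PiLp.add_apply, PiLp.toLp_apply] <;> split <;> simp
  map_smul' c v := by
    apply PiLp.ext; intro i
    rcases i with j | j <;> simp only [PiLp.smul_apply, PiLp.toLp_apply, RingHom.id_apply, smul_eq_mul] <;>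
      split <;> simp

def Cmap (N : ℕ) : E N →ₗ[ℂ] EuclideanSpace ℂ (Fin 2) where
  toFun v := WithLp.toLp 2 fun i => if i = 0 then ∑ j : Fin N, v (Sum.inl j) else ∑ j : Fin N, v (Sum.inr j)
  map_add' u v := by
    apply PiLp.ext; intro i
    by_cases h : i = (0 : Fin 2) <;> simp [h, PiLp.add_apply, Finset.sum_add_distrib]
  map_smul' c v := by
    apply PiLp.ext; intro i
    by_cases h : i = (0 : Fin 2) <;> simp [h, PiLp.smul_apply, Finset.mul_sum]

/-- `Ym N m` : complete flags `0 = L_0 ⊊ L_1 ⊊ … ⊊ L_m` of `z`-stable subspaces of `E`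
with `dim L_j = j`.  A tuple `(L_1,…,L_m) ∈ Y_m` is encoded as the function
`L : Fin (m+1) → Submodule ℂ (E N)` with the convention `L 0 = 0`. -/
def Ym (N m : ℕ) : Set (Fin (m + 1) → Submodule ℂ (E N)) :=
  {L | L 0 = ⊥ ∧ StrictMono L ∧ (∀ j : Fin (m + 1), Module.finrank ℂ (L j) = (j : ℕ)) ∧
    ∀ j : Fin (m + 1), (L j).map (zmap N) ≤ L j}

/-- The map `φ_m`, in coordinates: `φ_m(L)_j = C(L_{j+1} ∩ L_j^⊥)` (0-based `j`),
i.e. the tuple `(C(L_1), C(L_2 ∩ L_1^⊥), …, C(L_m ∩ L_{m-1}^⊥))`. -/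
def phiRaw (N m : ℕ) (L : Fin (m + 1) → Submodule ℂ (E N)) :
    Fin m → Submodule ℂ (EuclideanSpace ℂ (Fin 2)) :=
  fun j => ((L j.succ) ⊓ (L j.castSucc)ᗮ).map (Cmap N)

/-- `X_{m,i} = {(L_1,…,L_m) ∈ Y_m : L_{i+1} = z^{-1}(L_{i-1})}` (with `L_0 = 0`). -/
def Xmi (N m i : ℕ) : Set (Fin (m + 1) → Submodule ℂ (E N)) :=
  {L | L ∈ Ym N m ∧ ∀ (h : i + 1 < m + 1) (h' : i - 1 < m + 1),
    L ⟨i + 1, h⟩ = (L ⟨i - 1, h'⟩).comap (zmap N)}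

/-- `A_{m,i} = {(l_1,…,l_m) ∈ (ℙ¹)^m : l_{i+1} = l_i^⊥}`; a point of `(ℙ¹)^m` is encoded
as a tuple of rank-one subspaces of `ℂ²`, the line `l_k` sitting at 0-based index `k-1`. -/
def Ami (m i : ℕ) : Set (Fin m → Submodule ℂ (EuclideanSpace ℂ (Fin 2))) :=
  {l | (∀ j, Module.finrank ℂ (l j) = 1) ∧
    ∀ (h : i < m) (h' : i - 1 < m), l ⟨i, h⟩ = (l ⟨i - 1, h'⟩)ᗮ}

/-- `q_{m,i}(L_1,…,L_m) = (L_1,…,L_{i-1}, zL_{i+2},…,zL_m)`. -/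
def qRaw (N m i : ℕ) (hm : 2 ≤ m) (L : Fin (m + 1) → Submodule ℂ (E N)) :
    Fin (m - 2 + 1) → Submodule ℂ (E N) :=
  fun j =>
    if (j : ℕ) < i then L ⟨(j : ℕ), by have := j.isLt; omega⟩
    else (L ⟨(j : ℕ) + 2, by have := j.isLt; omega⟩).map (zmap N)

/-- The forgetful map `g_{m,i}(l_1,…,l_m) = (l_1,…,l_{i-1}, l_{i+2},…,l_m)`. -/
def gRaw (m i : ℕ) (l : Fin m → Submodule ℂ (EuclideanSpace ℂ (Fin 2))) :
    Fin (m - 2) → Submodule ℂ (EuclideanSpace ℂ (Fin 2)) :=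
  fun k =>
    if (k : ℕ) + 1 < i then l ⟨(k : ℕ), by have := k.isLt; omega⟩
    else l ⟨(k : ℕ) + 2, by have := k.isLt; omega⟩

/-- The involution `I_{2n}` of `(ℙ¹)^m`: `l_j ↦ l_j` for `j` odd, `l_j ↦ l_j^⊥` for `j` even
(the line `l_j` sits at 0-based index `j-1`). -/
def Imap (m : ℕ) (l : Fin m → Submodule ℂ (EuclideanSpace ℂ (Fin 2))) :
    Fin m → Submodule ℂ (EuclideanSpace ℂ (Fin 2)) :=
  fun k => if (k : ℕ) % 2 = 0 then l k else (l k)ᗮ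

/-- A crossingless matching of the `2n` points `{1,…,2n}`: a partition of `{1,…,2n}` into
`n` pairs (each pair recorded as `(i,j)` with `i < j`) such that there is no quadruple
`i < j < k < l` with `(i,k)` and `(j,l)` paired. -/
structure CrossinglessMatching (n : ℕ) where
  pairs : Finset (ℕ × ℕ)
  card_eq : pairs.card = n
  lt : ∀ p ∈ pairs, p.1 < p.2
  mem_range : ∀ p ∈ pairs, 1 ≤ p.1 ∧ p.2 ≤ 2 * n
  cover : ∀ k, 1 ≤ k → k ≤ 2 * n → ∃! p, p ∈ pairs ∧ (p.1 = k ∨ p.2 = k)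
  noncross : ∀ i j k l : ℕ, i < j → j < k → k < l → (i, k) ∈ pairs → (j, l) ∉ pairs

/-- `{(L_1,…,L_m) ∈ Y_m : L_{s_a(j)} = z^{-d_a(j)} L_{j-1} for all j ∈ O_a}`, where for a
pair `(i,j)` of the matching, `s_a(i) = j`, `d_a(i) = (j-i+1)/2`, and `z^{-d}` is the
`d`-fold preimage under `z`. -/
def KaSet (N m : ℕ) (pairs : Finset (ℕ × ℕ)) : Set (Fin (m + 1) → Submodule ℂ (E N)) :=
  {L | L ∈ Ym N m ∧ ∀ p ∈ pairs,
    L ((p.2 : Fin (m + 1))) =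
      (L ((p.1 - 1 : ℕ) : Fin (m + 1))).comap ((zmap N) ^ ((p.2 - p.1 + 1) / 2))}

/-- `S_a = {(l_1,…,l_{2n}) ∈ (ℙ¹)^{2n} : l_{s_a(j)} = l_j ∀ j ∈ O_a}` (0-based indexing, so
`l_k` sits at index `k-1`). -/
def SaSet (m : ℕ) (pairs : Finset (ℕ × ℕ)) :
    Set (Fin m → Submodule ℂ (EuclideanSpace ℂ (Fin 2))) :=
  {l | (∀ j, Module.finrank ℂ (l j) = 1) ∧
    ∀ p ∈ pairs, ∀ (h2 : p.2 - 1 < m) (h1 : p.1 - 1 < m), l ⟨p.2 - 1, h2⟩ = l ⟨p.1 - 1, h1⟩}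

/-- `T_a = {(l_1,…,l_{2n}) ∈ (ℙ¹)^{2n} : l_{s_a(j)} = l_j^⊥ ∀ j ∈ O_a}`. -/
def TaSet (m : ℕ) (pairs : Finset (ℕ × ℕ)) :
    Set (Fin m → Submodule ℂ (EuclideanSpace ℂ (Fin 2))) :=
  {l | (∀ j, Module.finrank ℂ (l j) = 1) ∧
    ∀ p ∈ pairs, ∀ (h2 : p.2 - 1 < m) (h1 : p.1 - 1 < m), l ⟨p.2 - 1, h2⟩ = (l ⟨p.1 - 1, h1⟩)ᗮ}

open Module

theorem Submodule.finrank_comap_le_add_finrank_ker {K V V' : Type*} [DivisionRing K] [AddCommGroup V]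
    [Module K V] [AddCommGroup V'] [Module K V'] [FiniteDimensional K V] [FiniteDimensional K V']
    (f : V →ₗ[K] V') (U : Submodule K V') :
    finrank K (U.comap f) ≤ finrank K U + finrank K (LinearMap.ker f) := by
  have h := LinearMap.finrank_range_add_finrank_ker (f.domRestrict (U.comap f))
  rw [LinearMap.range_domRestrict, LinearMap.ker_domRestrict,
    (Submodule.comapSubtypeEquivOfLe (LinearMap.ker_le_comap f)).finrank_eq] at h
  have := Submodule.finrank_mono (Submodule.map_comap_le f U)
  omega

theorem Submodule.finrank_comap_pow_le {K V : Type*} [DivisionRing K] [AddCommGroup V]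
    [Module K V] [FiniteDimensional K V] (f : Module.End K V) {r : ℕ}
    (hf : finrank K (LinearMap.ker f) ≤ r) (d : ℕ) (U : Submodule K V) :
    finrank K (U.comap (f ^ d)) ≤ finrank K U + r * d := by
  induction d with
  | zero => rw [pow_zero, Module.End.one_eq_id, Submodule.comap_id]; omega
  | succ d ih =>
    rw [pow_succ, Module.End.mul_eq_comp, Submodule.comap_comp]
    have := Submodule.finrank_comap_le_add_finrank_ker f (U.comap (f ^ d))
    rw [Nat.mul_succ]
    omega

theorem zmap_apply_inl {N : ℕ} (v : E N) {j : ℕ} (h : j + 1 < N) :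
    zmap N v (Sum.inl ⟨j, by omega⟩) = v (Sum.inl ⟨j + 1, h⟩) := by
  simp [zmap, h]

theorem zmap_apply_inr {N : ℕ} (v : E N) {j : ℕ} (h : j + 1 < N) :
    zmap N v (Sum.inr ⟨j, by omega⟩) = v (Sum.inr ⟨j + 1, h⟩) := by
  simp [zmap, h]

theorem apply_eq_zero_of_mem_ker_zmap {N : ℕ} {v : E N} (hv : v ∈ LinearMap.ker (zmap N))
    (j : Fin N) (hj : (j : ℕ) ≠ 0) : v (Sum.inl j) = 0 ∧ v (Sum.inr j) = 0 := by
  obtain ⟨_ | k, hk⟩ := j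
  · exact absurd rfl hj
  · rw [← zmap_apply_inl v hk, ← zmap_apply_inr v hk, LinearMap.mem_ker.mp hv]
    exact ⟨rfl, rfl⟩

-- On `ker z` only the two bottom coordinates can be nonzero, and `C` sums each column.
theorem Cmap_domRestrict_ker_zmap_injective (N : ℕ) :
    Function.Injective ((Cmap N).domRestrict (LinearMap.ker (zmap N))) := by
  rw [← LinearMap.ker_eq_bot, Submodule.eq_bot_iff]
  rintro ⟨v, hv⟩ hCv
  have hC : Cmap N v = 0 := LinearMap.mem_ker.mp hCv
  have hzero := apply_eq_zero_of_mem_ker_zmap hv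
  refine Subtype.ext (PiLp.ext fun i => ?_)
  obtain j | j := i <;> by_cases hj : (j : ℕ) = 0
  · have hsum : ∑ i, v (Sum.inl i) = v (Sum.inl j) := Finset.sum_eq_single_of_mem j
      (Finset.mem_univ j) fun i _ hij => (hzero i fun h => hij (Fin.ext (h.trans hj.symm))).1
    simpa [Cmap, hsum] using congrArg (· 0) hC
  · exact (hzero j hj).1
  · have hsum : ∑ i, v (Sum.inr i) = v (Sum.inr j) := Finset.sum_eq_single_of_mem j
      (Finset.mem_univ j) fun i _ hij => (hzero i fun h => hij (Fin.ext (h.trans hj.symm))).2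
    simpa [Cmap, hsum] using congrArg (· 1) hC
  · exact (hzero j hj).2

theorem finrank_ker_zmap_le_two (N : ℕ) : finrank ℂ (LinearMap.ker (zmap N)) ≤ 2 := by
  simpa using LinearMap.finrank_le_finrank_of_injective (Cmap_domRestrict_ker_zmap_injective N)

theorem finrank_comap_zmap_pow_le (N d : ℕ) (U : Submodule ℂ (E N)) :
    finrank ℂ (U.comap (zmap N ^ d)) ≤ finrank ℂ U + 2 * d :=
  Submodule.finrank_comap_pow_le (zmap N) (finrank_ker_zmap_le_two N) d U

namespace CrossinglessMatching

variable {n : ℕ} (a : CrossinglessMatching n)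

def IsCut (k : ℕ) : Prop := ∀ p ∈ a.pairs, p.1 ≤ k ↔ p.2 ≤ k

theorem isCut_two_mul : a.IsCut (2 * n) := fun p hp => by
  have := a.lt p hp
  have := a.mem_range p hp
  omega

theorem eq_of_mem_of_endpoint {p q : ℕ × ℕ} (hp : p ∈ a.pairs) (hq : q ∈ a.pairs) {k : ℕ}
    (hpk : p.1 = k ∨ p.2 = k) (hqk : q.1 = k ∨ q.2 = k) : p = q := by
  have := a.lt p hp
  have := a.mem_range p hp
  exact (a.cover k (by omega) (by omega)).unique ⟨hp, hpk⟩ ⟨hq, hqk⟩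

theorem exists_pair_of_isCut {k : ℕ} (hk : a.IsCut k) (hk0 : 0 < k) (hkn : k ≤ 2 * n) :
    ∃ p ∈ a.pairs, p.2 = k ∧ a.IsCut (p.1 - 1) := by
  obtain ⟨p, ⟨hp, hpk⟩, -⟩ := a.cover k hk0 hkn
  have hp12 := a.lt p hp
  have hp1 := (a.mem_range p hp).1
  have hp2 : p.2 = k := hpk.resolve_left fun h => by have := (hk p hp).mp h.le; omega
  refine ⟨p, hp, hp2, fun q hq => ⟨fun hq1 => ?_, fun hq2 => by have := a.lt q hq; omega⟩⟩
  by_contra hq2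
  have hq12 := a.lt q hq
  have hqk : q.2 ≤ k := (hk q hq).mp (by omega)
  have hqp1 : q.2 ≠ p.1 := fun h => by
    obtain rfl := a.eq_of_mem_of_endpoint hq hp (Or.inr h) (Or.inl rfl)
    omega
  have hqp2 : q.2 ≠ p.2 := fun h => by
    obtain rfl := a.eq_of_mem_of_endpoint hq hp (Or.inr h) (Or.inr rfl)
    omega
  exact a.noncross q.1 p.1 q.2 p.2 (by omega) (by omega) (by omega) hq hp

end CrossinglessMatching

namespace Ym

variable {N m : ℕ} {L : Fin (m + 1) → Submodule ℂ (E N)}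

theorem finrank_eq (hL : L ∈ Ym N m) {k : ℕ} (hk : k ≤ m) : finrank ℂ (L k) = k := by
  simpa [Fin.val_cast_of_lt (Nat.lt_succ_of_le hk)] using hL.2.2.1 k

theorem finrank_comap_le (hL : L ∈ Ym N m) {i : ℕ} (hi : i ≤ m) (d : ℕ) :
    finrank ℂ ((L i).comap (zmap N ^ d)) ≤ i + 2 * d := by
  simpa only [Ym.finrank_eq hL hi] using finrank_comap_zmap_pow_le N d (L i)

theorem eq_comap_of_le (hL : L ∈ Ym N m) {i j d : ℕ} (hj : j ≤ m) (hij : i + 2 * d ≤ j)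
    (h : L j ≤ (L i).comap (zmap N ^ d)) : L j = (L i).comap (zmap N ^ d) :=
  Submodule.eq_of_le_of_finrank_le h <| by
    rw [Ym.finrank_eq hL hj]
    exact (Ym.finrank_comap_le hL (by omega) d).trans hij

end Ym

theorem KaSet.eq_ker_of_isCut {N n : ℕ} {a : CrossinglessMatching n}
    {L : Fin (2 * n + 1) → Submodule ℂ (E N)} (hL : L ∈ KaSet N (2 * n) a.pairs) {k : ℕ}
    (hk : a.IsCut k) (hkn : k ≤ 2 * n) : 2 ∣ k ∧ L k = LinearMap.ker (zmap N ^ (k / 2)) := by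
  induction k using Nat.strong_induction_on with
  | _ k ih =>
    rcases Nat.eq_zero_or_pos k with rfl | hk0
    · simpa [Module.End.one_eq_id] using hL.1.1
    obtain ⟨p, hp, rfl, hcut⟩ := a.exists_pair_of_isCut hk hk0 hkn
    have hp12 := a.lt p hp
    have hp1 := (a.mem_range p hp).1
    obtain ⟨hdvd, hker⟩ := ih (p.1 - 1) (by omega) hcut (by omega)
    have hdim := hL.2 p hp ▸ Ym.finrank_eq hL.1 hkn
    have hcomap := Ym.finrank_comap_le hL.1 (i := p.1 - 1) (by omega) ((p.2 - p.1 + 1) / 2)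
    refine ⟨by omega, ?_⟩
    rw [hL.2 p hp, hker, ← LinearMap.ker_comp, ← Module.End.mul_eq_comp, ← pow_add]
    congr 3
    omega

theorem Ka_alt_description_general (N n : ℕ) (a : CrossinglessMatching n) :
    {L : Fin (2 * n + 1) → Submodule ℂ (E N) | L ∈ Ym N (2 * n) ∧
      L (Fin.last (2 * n)) = LinearMap.ker ((zmap N) ^ n) ∧
      ∀ p ∈ a.pairs,
        L ((p.2 : Fin (2 * n + 1))) =
          LinearMap.ker ((zmap N) ^ n) ⊓
            (L ((p.1 - 1 : ℕ) : Fin (2 * n + 1))).comap ((zmap N) ^ ((p.2 - p.1 + 1) / 2))}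
    = KaSet N (2 * n) a.pairs := by
  ext L
  constructor
  · rintro ⟨hY, -, hpair⟩
    refine ⟨hY, fun p hp => ?_⟩
    have := a.lt p hp
    obtain ⟨hp1, hp2⟩ := a.mem_range p hp
    exact Ym.eq_comap_of_le hY hp2 (by omega) ((hpair p hp).le.trans inf_le_right)
  · intro hL
    have hlast : L (Fin.last (2 * n)) = LinearMap.ker (zmap N ^ n) := by
      simpa [Fin.natCast_eq_last] using (KaSet.eq_ker_of_isCut hL a.isCut_two_mul le_rfl).2
    refine ⟨hL.1, hlast, fun p hp => ?_⟩
    rw [← hL.2 p hp, right_eq_inf, ← hlast]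
    exact hL.1.2.1.monotone (Fin.le_last _)

theorem Ka_alt_description (N n : ℕ) (hn : 1 ≤ n) (hN : 2 * n ≤ N)
    (a : CrossinglessMatching n) :
    {L : Fin (2 * n + 1) → Submodule ℂ (E N) | L ∈ Ym N (2 * n) ∧
      L (Fin.last (2 * n)) = LinearMap.ker ((zmap N) ^ n) ∧
      ∀ p ∈ a.pairs,
        L ((p.2 : Fin (2 * n + 1))) =
          LinearMap.ker ((zmap N) ^ n) ⊓
            (L ((p.1 - 1 : ℕ) : Fin (2 * n + 1))).comap ((zmap N) ^ ((p.2 - p.1 + 1) / 2))}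
    = KaSet N (2 * n) a.pairs :=
  Ka_alt_description_general N n a
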